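/- arXiv:0911.4595 — 2 statements merged into one kernel-verified Lean document; each statement's English description precedes it below -/
import Mathlib

section
/- Let M be an invertible endomorphism of a finitely generated abelian group K such that (M − id)²(M² − id)(M⁵ − id) = 0, (M − id)³(M² − id) = 0, and (M − id)³(M⁵ − id) = 0. Then (M − id)⁴ = 0, i.e. M is unipotent of index at most 4. -/
/-- K-theory relations for `X(10) ⊂ ℙ⁴(11125)`: if `M` is an invertible endomorphism of a
finitely generated abelian group `K` satisfying the three relations coming from the
primitive collections, then `M` is unipotent of index at most `4`. -/
theorem maximal_unipotence_X10 {K : Type*} [AddCommGroup K] [AddGroup.FG K]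
    (M : Module.End ℤ K) (hMunit : IsUnit M)
    (h1 : (M - 1) ^ 2 * (M ^ 2 - 1) * (M ^ 5 - 1) = 0)
    (h2 : (M - 1) ^ 3 * (M ^ 2 - 1) = 0)
    (h3 : (M - 1) ^ 3 * (M ^ 5 - 1) = 0) :
    (M - 1) ^ 4 = 0 := by
  have key : (M - 1) ^ 4
      = (M - 1) ^ 3 * (M ^ 5 - 1) - (M ^ 3 + M) * ((M - 1) ^ 3 * (M ^ 2 - 1)) := by
    noncomm_ring
  rw [key, h2, h3, mul_zero, sub_zero]
end

section
/- Let A be an object of a triangulated category C and L an autoequivalence with a natural transformation p : id → L∘[1]-shifted target, such that the total complex (iterated cone) N(p₁)∘N(p₂)∘⋯∘N(p_ℓ)(A) ≅ 0 where N(p_a)(X) = Cone(p_a : X → L^{d_a}(X)[2]). Then in the Grothendieck group K(C), the class [A] satisfies ∏_{a=1}^{ℓ}(L^{d_a} − id)[A] = 0, where L also denotes the induced automorphism of K(C). -/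
open CategoryTheory CategoryTheory.Limits CategoryTheory.Pretriangulated

/-- `n`-th iterate of an endofunctor. -/
def funPow {C : Type*} [Category C] (F : C ⥤ C) : ℕ → C ⥤ C
  | 0 => 𝟭 C
  | n + 1 => funPow F n ⋙ F

/-! Additivity on distinguished triangles together with `[1] = -1` gives `[2] = id` on classes,
so the triangle `X → L^{dₐ}(X)[2] → Nₐ(X) → X[1]` yields `[Nₐ(X)] = (L^{dₐ} - 1)[X]`.
Since the factors `L^{dₐ} - 1` commute, the class of the iterated cone is
`∏ₐ (L^{dₐ} - 1)[A]`, and it vanishes because the iterated cone is zero. -/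

section ClassFunction

variable {C : Type*} [Category C] {R K : Type*} [Semiring R] [AddCommMonoid K] [Module R K]
  {cl : C → K}

theorem funPow_obj_eq_pow_apply (L : C ⥤ C) (lK : Module.End R K)
    (hlK : ∀ X, cl (L.obj X) = lK (cl X)) (n : ℕ) (X : C) :
    cl ((funPow L n).obj X) = (lK ^ n) (cl X) := by
  induction n with
  | zero => rfl
  | succ n ih =>
    change cl (L.obj ((funPow L n).obj X)) = _
    rw [hlK, ih, pow_succ', Module.End.mul_apply]

theorem foldr_comp_obj_eq_prod_apply {ι : Type*} (F : ι → C ⥤ C) (φ : ι → Module.End R K)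
    (hF : ∀ i X, cl ((F i).obj X) = φ i (cl X)) (hφ : ∀ i j, Commute (φ i) (φ j))
    (l : List ι) (X : C) :
    cl ((l.foldr (fun i G ↦ F i ⋙ G) (𝟭 C)).obj X) = (l.map φ).prod (cl X) := by
  induction l generalizing X with
  | nil => rfl
  | cons i l ih =>
    have hcomm : Commute (φ i) (l.map φ).prod :=
      Commute.list_prod_right _ _ fun ψ hψ ↦ by
        obtain ⟨j, -, rfl⟩ := List.mem_map.mp hψ
        exact hφ i j
    change cl ((l.foldr (fun i G ↦ F i ⋙ G) (𝟭 C)).obj ((F i).obj X)) = _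
    rw [ih, hF, List.map_cons, List.prod_cons, hcomm.eq, Module.End.mul_apply]

end ClassFunction

namespace CategoryTheory.Pretriangulated

variable {C : Type*} [Category C] [HasZeroObject C] [HasShift C ℤ] [Preadditive C]
  [∀ n : ℤ, (shiftFunctor C n).Additive] [Pretriangulated C] {K : Type*} [AddCommGroup K]

def IsTriangleAdditive (cl : C → K) : Prop :=
  ∀ T ∈ distTriang C, cl T.obj₂ = cl T.obj₁ + cl T.obj₃

namespace IsTriangleAdditive

open ZeroObject

variable {cl : C → K}

theorem obj₃_eq_sub (hcl : IsTriangleAdditive cl) {T : Triangle C} (hT : T ∈ distTriang C) :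
    cl T.obj₃ = cl T.obj₂ - cl T.obj₁ :=
  eq_sub_of_add_eq' (hcl T hT).symm

theorem eq_zero_of_isZero (hcl : IsTriangleAdditive cl) {X : C} (hX : IsZero X) : cl X = 0 := by
  have hT : Triangle.mk (𝟙 X) 0 0 ∈ distTriang C :=
    (Triangle.distinguished_iff_of_isZero₃ _ hX).mpr (inferInstanceAs (IsIso (𝟙 X)))
  simpa using hcl.obj₃_eq_sub hT

theorem eq_of_iso (hcl : IsTriangleAdditive cl) {X Y : C} (e : X ≅ Y) : cl X = cl Y := by
  have hT : Triangle.mk e.hom (0 : Y ⟶ 0) 0 ∈ distTriang C :=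
    (Triangle.distinguished_iff_of_isZero₃ _ (isZero_zero C)).mpr (inferInstanceAs (IsIso e.hom))
  simpa [hcl.eq_zero_of_isZero (isZero_zero C)] using (hcl _ hT).symm

theorem shift_two (hcl : IsTriangleAdditive cl) (hshift : ∀ X : C, cl (X⟦(1 : ℤ)⟧) = -cl X)
    (X : C) : cl (X⟦(2 : ℤ)⟧) = cl X := by
  rw [hcl.eq_of_iso ((shiftFunctorAdd' C 1 1 2 one_add_one_eq_two).app X), Functor.comp_obj,
    hshift, hshift, neg_neg]

end IsTriangleAdditive

end CategoryTheory.Pretriangulated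

/-- Let `C` be a triangulated category with Grothendieck group `K` (modelled by a class
function `cl` additive on distinguished triangles, with `[1]` acting by `−1`), `L` an
autoequivalence inducing `lK` on `K`, and for each `a` an endofunctor `N a` fitting in
distinguished triangles `X ⟶ L^{dₐ}(X)[2] ⟶ N a (X) ⟶ X[1]`. If the iterated cone
`N(p₁)∘⋯∘N(p_ℓ)(A) ≅ 0`, then `∏ₐ (lK^{dₐ} − id) [A] = 0` in `K`. -/
theorem iterated_cone_Ktheory_relation {C : Type*} [Category C] [HasZeroObject C]
    [Preadditive C] [HasShift C ℤ] [∀ n : ℤ, (shiftFunctor C n).Additive]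
    [Pretriangulated C]
    {K : Type*} [AddCommGroup K] (cl : C → K)
    (hcl : ∀ T ∈ distTriang C, cl T.obj₂ = cl T.obj₁ + cl T.obj₃)
    (hshift : ∀ X : C, cl (X⟦(1 : ℤ)⟧) = - cl X)
    (L : C ⥤ C) [L.IsEquivalence] (lK : Module.End ℤ K)
    (hlK : ∀ X : C, cl (L.obj X) = lK (cl X))
    (ℓ : ℕ) (d : Fin ℓ → ℕ) (hd : ∀ a, 1 ≤ d a)
    (N : Fin ℓ → C ⥤ C)
    (hN : ∀ (a : Fin ℓ) (X : C),
      ∃ (f : X ⟶ ((funPow L (d a)).obj X)⟦(2 : ℤ)⟧)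
        (g : ((funPow L (d a)).obj X)⟦(2 : ℤ)⟧ ⟶ (N a).obj X)
        (h : (N a).obj X ⟶ X⟦(1 : ℤ)⟧),
        Triangle.mk f g h ∈ distTriang C)
    (A : C)
    (hzero : IsZero (((List.finRange ℓ).foldr (fun a F => N a ⋙ F) (𝟭 C)).obj A)) :
    (((List.finRange ℓ).map fun a => lK ^ d a - 1).prod) (cl A) = 0 := by
  have hcl : IsTriangleAdditive cl := hcl
  have hcone (a : Fin ℓ) (X : C) : cl ((N a).obj X) = (lK ^ d a - 1) (cl X) := by
    obtain ⟨f, g, h, hT⟩ := hN a X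
    refine (hcl.obj₃_eq_sub hT).trans ?_
    rw [Triangle.mk_obj₁, Triangle.mk_obj₂, hcl.shift_two hshift,
      funPow_obj_eq_pow_apply L lK hlK, LinearMap.sub_apply, Module.End.one_apply]
  have hcomm (a b : Fin ℓ) : Commute (lK ^ d a - 1) (lK ^ d b - 1) :=
    (((Commute.refl lK).pow_pow _ _).sub_left (Commute.one_left _)).sub_right (Commute.one_right _)
  rw [← foldr_comp_obj_eq_prod_apply N _ hcone hcomm, hcl.eq_zero_of_isZero hzero]
end
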